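/- arXiv:1806.02924 — 2 statements merged into one kernel-verified Lean document; each statement's English description precedes it below -/
import Mathlib

section
/- Fix ξ > 0 and u ∈ [0,1). The function h₁(z) = log(1 + e^{-(1-u)z - uξ}) - log(1 + e^{-z}) is monotonically increasing on (-∞, ξ). -/
/-!
The derivative of `h₁` is `σ(-z) - (1 - u) σ(-z - u (ξ - z))`, with `σ` the logistic sigmoid,
the derivative of `t ↦ log (1 + eᵗ)`. For `z < ξ` the second argument is the smaller one, so
monotonicity and positivity of `σ` together with `0 ≤ 1 - u ≤ 1` make it nonnegative.
-/

open Real Set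

lemma sigmoid_eq_exp_div_one_add_exp (x : ℝ) : sigmoid x = exp x / (1 + exp x) := by
  rw [sigmoid_def, exp_neg]
  field_simp
  ring

lemma HasDerivAt.log_one_add_exp {f : ℝ → ℝ} {f' x : ℝ} (hf : HasDerivAt f f' x) :
    HasDerivAt (fun t => Real.log (1 + Real.exp (f t))) (sigmoid (f x) * f') x := by
  convert (hf.exp.const_add 1).log (by positivity) using 1
  rw [sigmoid_eq_exp_div_one_add_exp]
  ring

theorem h1_monotone_general (ξ u : ℝ) (hu : u ∈ Set.Ico (0:ℝ) 1) :
    MonotoneOn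
      (fun z : ℝ =>
        Real.log (1 + Real.exp (-(1 - u) * z - u * ξ)) - Real.log (1 + Real.exp (-z)))
      (Set.Iio ξ) := by
  have hderiv (z : ℝ) : HasDerivAt
      (fun z : ℝ => log (1 + exp (-(1 - u) * z - u * ξ)) - log (1 + exp (-z)))
      (sigmoid (-z) - (1 - u) * sigmoid (-(1 - u) * z - u * ξ)) z := by
    have hlin : HasDerivAt (fun z : ℝ => -(1 - u) * z - u * ξ) (-(1 - u)) z := by
      simpa using ((hasDerivAt_id z).const_mul (-(1 - u))).sub_const (u * ξ)
    exact (hlin.log_one_add_exp.sub (hasDerivAt_neg z).log_one_add_exp).congr_deriv (by ring)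
  refine monotoneOn_of_hasDerivWithinAt_nonneg (convex_Iio ξ)
    (fun z _ => (hderiv z).continuousAt.continuousWithinAt)
    (fun z _ => (hderiv z).hasDerivWithinAt) fun z hz => ?_
  rw [interior_Iio, mem_Iio] at hz
  have hle : sigmoid (-(1 - u) * z - u * ξ) ≤ sigmoid (-z) :=
    sigmoid_le (by nlinarith [hu.1, hz.le])
  nlinarith [hu.1, sigmoid_nonneg (-(1 - u) * z - u * ξ)]

theorem h1_monotone (ξ u : ℝ) (hξ : 0 < ξ) (hu : u ∈ Set.Ico (0:ℝ) 1) :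
    MonotoneOn
      (fun z : ℝ =>
        Real.log (1 + Real.exp (-(1 - u) * z - u * ξ)) - Real.log (1 + Real.exp (-z)))
      (Set.Iio ξ) :=
  h1_monotone_general ξ u hu
end

section
/- In the Gaussian mixture model x | y ~ N(y·w*, σ²I_d) with equal class priors, for a linear classifier f_w(x) = wᵀx with w ≠ 0 and L_∞-bounded adversary of radius ε ≥ 0, the old-definition adversarial 0-1 risk equals G_{adv,0-1}(f_w) = Φ((‖w‖₁ε - wᵀw*)/(σ‖w‖₂)) (counting points where some perturbation δ with ‖δ‖_∞ ≤ ε makes the classifier err on label y). -/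
open MeasureTheory ProbabilityTheory Matrix

/-- The standard normal CDF. -/
noncomputable def stdGaussCDF (t : ℝ) : ℝ := (gaussianReal 0 1 (Set.Iic t)).toReal

/-!
Against an `L∞` perturbation of size `ε`, the smallest (largest) value the adversary can give
`wᵀ(x + δ)` is `wᵀx ∓ ε‖w‖₁`, attained at the corner `δ = ∓ε · sign w` of the box. So each of the
two conditional error events is a half-line event for the projection `wᵀz` of the noise, whose
law is `N(0, σ²‖w‖₂²)` (compare characteristic functions); by the symmetry of this law both
events have probability `Φ((ε‖w‖₁ - wᵀw*)/(σ‖w‖₂))`.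
-/

open scoped NNReal
open Set

section BoxPerturbation

variable {ι : Type*} [Fintype ι] {ε : ℝ}

lemma abs_dotProduct_le_of_abs_le (w : ι → ℝ) {δ : ι → ℝ} (hδ : ∀ i, |δ i| ≤ ε) :
    |w ⬝ᵥ δ| ≤ ε * ∑ i, |w i| :=
  calc |w ⬝ᵥ δ| ≤ ∑ i, |w i * δ i| := Finset.abs_sum_le_sum_abs _ _
    _ ≤ ∑ i, ε * |w i| := Finset.sum_le_sum fun i _ => by
        rw [abs_mul, mul_comm]
        exact mul_le_mul_of_nonneg_right (hδ i) (abs_nonneg _)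
    _ = ε * ∑ i, |w i| := (Finset.mul_sum _ _ _).symm

lemma abs_mul_sign_le (hε : 0 ≤ ε) (x : ℝ) : |ε * SignType.sign x| ≤ ε := by
  rcases lt_trichotomy x 0 with h | h | h <;> simp [h, abs_of_nonneg hε, hε]

lemma dotProduct_mul_sign (ε : ℝ) (w : ι → ℝ) :
    w ⬝ᵥ (fun i => ε * SignType.sign (w i)) = ε * ∑ i, |w i| := by
  simp only [dotProduct, Finset.mul_sum, ← self_mul_sign]
  exact Finset.sum_congr rfl fun i _ => by ring

lemma exists_abs_le_dotProduct_add_le_iff (hε : 0 ≤ ε) (w x : ι → ℝ) (c : ℝ) :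
    (∃ δ : ι → ℝ, (∀ i, |δ i| ≤ ε) ∧ w ⬝ᵥ (x + δ) ≤ c) ↔ w ⬝ᵥ x - ε * ∑ i, |w i| ≤ c := by
  simp only [dotProduct_add]
  constructor
  · rintro ⟨δ, hδ, hle⟩
    linarith [neg_abs_le (w ⬝ᵥ δ), abs_dotProduct_le_of_abs_le w hδ]
  · intro h
    refine ⟨fun i => -ε * SignType.sign (w i), fun i => ?_, ?_⟩
    · simpa only [neg_mul, abs_neg] using abs_mul_sign_le hε (w i)
    · rw [dotProduct_mul_sign]
      linarith

lemma exists_abs_le_lt_dotProduct_add_iff (hε : 0 ≤ ε) (w x : ι → ℝ) (c : ℝ) :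
    (∃ δ : ι → ℝ, (∀ i, |δ i| ≤ ε) ∧ c < w ⬝ᵥ (x + δ)) ↔ c < w ⬝ᵥ x + ε * ∑ i, |w i| := by
  simp only [dotProduct_add]
  constructor
  · rintro ⟨δ, hδ, hlt⟩
    linarith [le_abs_self (w ⬝ᵥ δ), abs_dotProduct_le_of_abs_le w hδ]
  · intro h
    refine ⟨fun i => ε * SignType.sign (w i), fun i => abs_mul_sign_le hε (w i), ?_⟩
    rw [dotProduct_mul_sign]
    linarith

lemma setOf_exists_dotProduct_add_nonpos (hε : 0 ≤ ε) (w a : ι → ℝ) :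
    {z | ∃ δ : ι → ℝ, (∀ i, |δ i| ≤ ε) ∧ w ⬝ᵥ (a + z + δ) ≤ 0}
      = (w ⬝ᵥ ·) ⁻¹' Iic (ε * ∑ i, |w i| - w ⬝ᵥ a) := by
  ext z
  refine (exists_abs_le_dotProduct_add_le_iff hε w _ 0).trans ?_
  simp only [dotProduct_add, mem_preimage, mem_Iic]
  constructor <;> intro <;> linarith

lemma setOf_exists_dotProduct_neg_add_pos (hε : 0 ≤ ε) (w a : ι → ℝ) :
    {z | ∃ δ : ι → ℝ, (∀ i, |δ i| ≤ ε) ∧ 0 < w ⬝ᵥ (-a + z + δ)}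
      = (w ⬝ᵥ ·) ⁻¹' Ioi (-(ε * ∑ i, |w i| - w ⬝ᵥ a)) := by
  ext z
  refine (exists_abs_le_lt_dotProduct_add_iff hε w _ 0).trans ?_
  simp only [dotProduct_add, dotProduct_neg, mem_preimage, mem_Ioi]
  constructor <;> intro <;> linarith

end BoxPerturbation

lemma gaussianReal_pi_map_dotProduct {ι : Type*} [Fintype ι] (m : ι → ℝ) (v : ι → ℝ≥0)
    (w : ι → ℝ) :
    (Measure.pi fun i => gaussianReal (m i) (v i)).map (w ⬝ᵥ ·)
      = gaussianReal (w ⬝ᵥ m) (∑ i, (w i ^ 2).toNNReal * v i) := by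
  set μ := Measure.pi fun i => gaussianReal (m i) (v i)
  refine Measure.ext_of_charFun (funext fun t => ?_)
  rw [charFun_apply_real, integral_map (by fun_prop) (by fun_prop)]
  calc ∫ z, Complex.exp (t * (w ⬝ᵥ z : ℝ) * Complex.I) ∂μ
      = ∫ z, ∏ i, Complex.exp ((t * w i : ℝ) * z i * Complex.I) ∂μ := by
        congr 1
        ext z
        simp only [dotProduct, ← Complex.exp_sum, Complex.ofReal_sum, Finset.mul_sum,
          Finset.sum_mul]
        push_cast
        exact congrArg Complex.exp (Finset.sum_congr rfl fun i _ => by ring)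
    _ = ∏ i, charFun (gaussianReal (m i) (v i)) (t * w i) := by
        rw [integral_fintype_prod_eq_prod
          (fun i (y : ℝ) => Complex.exp ((t * w i : ℝ) * y * Complex.I))]
        simp only [charFun_apply_real]
    _ = _ := by
        simp only [charFun_gaussianReal, ← Complex.exp_sum, dotProduct, NNReal.coe_sum,
          NNReal.coe_mul, Real.coe_toNNReal _ (sq_nonneg _)]
        push_cast
        rw [Finset.mul_sum, Finset.sum_mul, Finset.sum_mul, Finset.sum_div,
          ← Finset.sum_sub_distrib]
        exact congrArg Complex.exp (Finset.sum_congr rfl fun i _ => by ring)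

lemma gaussianReal_zero_Iic_eq_gaussianReal_Iic_div_sqrt {v : ℝ≥0} (hv : v ≠ 0) (c : ℝ) :
    gaussianReal 0 v (Iic c) = gaussianReal 0 1 (Iic (c / √v)) := by
  have hs : 0 < √(v : ℝ) := Real.sqrt_pos.mpr (NNReal.coe_pos.mpr (pos_iff_ne_zero.mpr hv))
  have hmap : (gaussianReal 0 1).map (√v * ·) = gaussianReal 0 v := by
    rw [gaussianReal_map_const_mul, mul_zero, mul_one]
    congr
    exact Real.sq_sqrt v.coe_nonneg
  rw [← hmap, Measure.map_apply (by fun_prop) measurableSet_Iic]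
  congr 1
  ext x
  simp only [mem_preimage, mem_Iic, le_div_iff₀ hs, mul_comm]

lemma gaussianReal_zero_Ioi_neg_eq_Iic {v : ℝ≥0} (hv : v ≠ 0) (c : ℝ) :
    gaussianReal 0 v (Ioi (-c)) = gaussianReal 0 v (Iic c) := by
  have hmap : (gaussianReal 0 v).map (fun x ↦ -x) = gaussianReal 0 v := by
    rw [gaussianReal_map_neg, neg_zero]
  calc gaussianReal 0 v (Ioi (-c)) = (gaussianReal 0 v).map (fun x ↦ -x) (Ioi (-c)) := by
        rw [hmap]
    _ = gaussianReal 0 v (Iio c) := by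
        rw [Measure.map_apply (by fun_prop) measurableSet_Ioi]
        congr 1
        ext x
        simp only [mem_preimage, mem_Ioi, mem_Iio, neg_lt_neg_iff]
    _ = gaussianReal 0 v (Iic c) := measure_congr <|
        Iio_ae_eq_Iic' (gaussianReal_absolutelyContinuous 0 hv (measure_singleton c))

/-- In the Gaussian mixture model (`y` uniform on `{-1,1}`, `x = y • w* + z`,
`z` with i.i.d. `N(0,σ²)` coordinates), the (old definition) adversarial 0-1
risk of the linear classifier `x ↦ wᵀx` against an `L∞` adversary of radius `ε`
equals `Φ((ε‖w‖₁ - wᵀw*)/(σ‖w‖₂))`. -/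
theorem gaussian_mixture_adv_risk {d : ℕ} (σ ε : ℝ) (hσ : 0 < σ) (hε : 0 ≤ ε)
    (wstar w : Fin d → ℝ) (hw : w ≠ 0) :
    (1/2) * ((Measure.pi fun _ : Fin d => gaussianReal 0 ⟨σ^2, sq_nonneg σ⟩)
        {z | ∃ δ : Fin d → ℝ, (∀ i, |δ i| ≤ ε) ∧ w ⬝ᵥ (wstar + z + δ) ≤ 0}).toReal
      + (1/2) * ((Measure.pi fun _ : Fin d => gaussianReal 0 ⟨σ^2, sq_nonneg σ⟩)
        {z | ∃ δ : Fin d → ℝ, (∀ i, |δ i| ≤ ε) ∧ 0 < w ⬝ᵥ (-wstar + z + δ)}).toReal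
    = stdGaussCDF ((ε * ∑ i, |w i| - w ⬝ᵥ wstar) / (σ * Real.sqrt (∑ i, (w i)^2))) := by
  set v : ℝ≥0 := ⟨σ ^ 2, sq_nonneg σ⟩
  set V : ℝ≥0 := ∑ i, (w i ^ 2).toNNReal * v
  have hlaw : (Measure.pi fun _ : Fin d => gaussianReal 0 v).map (w ⬝ᵥ ·) = gaussianReal 0 V := by
    simpa using gaussianReal_pi_map_dotProduct (fun _ => 0) (fun _ => v) w
  have hsum : 0 < ∑ i, w i ^ 2 := by
    obtain ⟨i, hi⟩ := Function.ne_iff.mp hw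
    exact Finset.sum_pos' (fun _ _ => sq_nonneg _) ⟨i, Finset.mem_univ _, pow_two_pos_of_ne_zero hi⟩
  have hsqrtV : √(V : ℝ) = σ * √(∑ i, w i ^ 2) := by
    have hV : (V : ℝ) = σ ^ 2 * ∑ i, w i ^ 2 := by
      simp only [V, NNReal.coe_sum, NNReal.coe_mul, Real.coe_toNNReal _ (sq_nonneg _),
        ← Finset.sum_mul, mul_comm]
      rfl
    rw [hV, Real.sqrt_mul (sq_nonneg σ), Real.sqrt_sq hσ.le]
  have hV : V ≠ 0 := by
    have : 0 < √(V : ℝ) := by rw [hsqrtV]; positivity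
    exact (NNReal.coe_pos.mp (Real.sqrt_pos.mp this)).ne'
  rw [setOf_exists_dotProduct_add_nonpos hε, setOf_exists_dotProduct_neg_add_pos hε,
    ← Measure.map_apply (by fun_prop) measurableSet_Iic,
    ← Measure.map_apply (by fun_prop) measurableSet_Ioi, hlaw,
    gaussianReal_zero_Ioi_neg_eq_Iic hV, gaussianReal_zero_Iic_eq_gaussianReal_Iic_div_sqrt hV,
    hsqrtV, stdGaussCDF]
  ring
end
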